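/- Let M be an n×m (q̂,p̂)-Manin matrix and N an m×n (p̂,q̂)-Manin matrix over R such that every entry of M commutes with every entry of N. Then for every k≥0, ∑_I cdet_{q̂}((MN)_{II}) = ∑_J cdet_{p̂}((NM)_{JJ}), where I runs over all increasing multi-indices of size k in {1,…,n} and J over all increasing multi-indices of size k in {1,…,m} (both sides being 0 when k>min(n,m)). Consequently, writing e_k(MN)=∑_I cdet_{q̂}((MN)_{II}) and e_k(NM)=∑_J cdet_{p̂}((NM)_{JJ}), if n≥m the characteristic polynomials char_{q̂}(MN,t)=∑_{k=0}^n(−1)^k e_k(MN) t^{n−k} and char_{p̂}(NM,t)=∑_{k=0}^m(−1)^k e_k(NM) t^{m−k} satisfy char_{q̂}(MN,t) = t^{n−m}·char_{p̂}(NM,t). -/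

import Mathlib

open scoped BigOperators Classical

noncomputable section

/-- `ε(q̂, I, σ)`: the `q̂`-inversion sign associated to the multi-index `I` and `σ ∈ S_r`,
`ε(q̂,I,σ) = ∏_{s<t, σ(s)>σ(t)} (-q_{i_{σ(s)} i_{σ(t)}})`. -/
def manEps {n r : ℕ} (q : Matrix (Fin n) (Fin n) ℂ) (I : Fin r → Fin n)
    (σ : Equiv.Perm (Fin r)) : ℂ :=
  ∏ st ∈ Finset.univ.filter (fun st : Fin r × Fin r => st.1 < st.2 ∧ σ st.2 < σ st.1),
    (-q (I (σ st.1)) (I (σ st.2)))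

/-- `ε(q̂, I)` for a multi-index `I`: `0` if two entries coincide, and
`∏_{s<t, i_s>i_t}(-q_{i_s i_t})` otherwise. -/
def manEpsIdx {n r : ℕ} (q : Matrix (Fin n) (Fin n) ℂ) (I : Fin r → Fin n) : ℂ :=
  if Function.Injective I then
    ∏ st ∈ Finset.univ.filter (fun st : Fin r × Fin r => st.1 < st.2 ∧ I st.2 < I st.1),
      (-q (I st.1) (I st.2))
  else 0

/-- The column `q̂`-minor determinant
`cdet_{q̂}(M_{IJ}) = ∑_{σ∈S_r} ε(q̂,I,σ) M_{i_{σ(1)},j_1} ⋯ M_{i_{σ(r)},j_r}`. -/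
def cdet {R : Type*} [Ring R] [Algebra ℂ R] {n m r : ℕ} (q : Matrix (Fin n) (Fin n) ℂ)
    (M : Matrix (Fin n) (Fin m) R) (I : Fin r → Fin n) (J : Fin r → Fin m) : R :=
  ∑ σ : Equiv.Perm (Fin r),
    manEps q I σ • (List.ofFn fun a : Fin r => M (I (σ a)) (J a)).prod

/-- A parametric matrix: nonzero entries with `q_{ij} q_{ji} = 1` and `q_{ii} = 1`. -/
def IsParametric {n : ℕ} (q : Matrix (Fin n) (Fin n) ℂ) : Prop :=
  (∀ i j, q i j ≠ 0) ∧ (∀ i j, q i j * q j i = 1) ∧ ∀ i, q i i = 1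

/-- An `n×m` `(q̂, p̂)`-Manin matrix over `R`. -/
def IsManin {R : Type*} [Ring R] [Algebra ℂ R] {n m : ℕ} (q : Matrix (Fin n) (Fin n) ℂ)
    (p : Matrix (Fin m) (Fin m) ℂ) (M : Matrix (Fin n) (Fin m) R) : Prop :=
  (∀ (i j : Fin n) (k : Fin m), i < j → M i k * M j k = q j i • (M j k * M i k)) ∧
  ∀ (i j : Fin n) (k l : Fin m), i < j → k < l →
    M i k * M j l - (q j i * p k l) • (M j l * M i k) + p k l • (M i l * M j k)
      - q j i • (M j k * M i l) = 0

/-- The `k`-th quantum elementary symmetric function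
`e_k(X) = ∑_I cdet_{q̂}(X_{II})`, summed over increasing multi-indices `I` of size `k`. -/
def esum {R : Type*} [Ring R] [Algebra ℂ R] {N : ℕ} (q : Matrix (Fin N) (Fin N) ℂ)
    (X : Matrix (Fin N) (Fin N) R) (k : ℕ) : R :=
  ∑ I : {I : Finset (Fin N) // I.card = k},
    cdet q X ⇑(I.1.orderEmbOfFin I.2) ⇑(I.1.orderEmbOfFin I.2)


/-!
For a `(q̂, p̂)`-Manin matrix `M` and strictly increasing rows `I`, the column minor
`cdet_{q̂}(M_{IJ})` is `p̂`-antisymmetric in the columns: by the two defining relations, exchanging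
two adjacent columns multiplies it by `-p_{j_{s+1} j_s}`. Hence permuting the columns by `τ`
multiplies it by `ε(p̂, J, τ)`, and it vanishes when two columns coincide. Expanding the entries
of `MN` and grouping the column tuples by their underlying sets then gives the Cauchy–Binet formula
`cdet_{q̂}((MN)_{IK}) = ∑_T cdet_{q̂}(M_{IT}) cdet_{p̂}(N_{TK})`. As the minors of `M` commute with
those of `N`, both `e_k(MN)` and `e_k(NM)` equal `∑_{I,T} cdet_{q̂}(M_{IT}) cdet_{p̂}(N_{TI})`;
finally `e_k(NM) = 0` for `k > m`, which produces the factor `t^{n-m}`.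
-/

open Equiv

section Inversions

variable {r : ℕ}

def inversions (σ : Perm (Fin r)) : Finset (Fin r × Fin r) :=
  {st | st.1 < st.2 ∧ σ st.2 < σ st.1}

theorem manEps_eq_prod_inversions {n : ℕ} (q : Matrix (Fin n) (Fin n) ℂ) (I : Fin r → Fin n)
    (σ : Perm (Fin r)) :
    manEps q I σ = ∏ st ∈ inversions σ, -q (I (σ st.1)) (I (σ st.2)) := rfl

theorem mem_inversions {σ : Perm (Fin r)} {st : Fin r × Fin r} :
    st ∈ inversions σ ↔ st.1 < st.2 ∧ σ st.2 < σ st.1 := by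
  simp [inversions]

@[simp]
theorem inversions_one : inversions (1 : Perm (Fin r)) = ∅ := by
  ext st
  simp only [mem_inversions, Perm.one_apply, Finset.notMem_empty, iff_false]
  exact fun h => lt_asymm h.1 h.2

@[simp]
theorem manEps_one {n : ℕ} (q : Matrix (Fin n) (Fin n) ℂ) (I : Fin r → Fin n) :
    manEps q I 1 = 1 := by
  simp [manEps_eq_prod_inversions]

theorem swap_castSucc_succ_lt_swap {i : Fin r} {u v : Fin (r + 1)} (huv : u < v)
    (hne : (u, v) ≠ (i.castSucc, i.succ)) :
    swap i.castSucc i.succ u < swap i.castSucc i.succ v := by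
  simp only [ne_eq, Prod.mk.injEq] at hne
  rw [swap_apply_def, swap_apply_def]
  rw [Fin.lt_def] at huv
  split_ifs <;> simp only [Fin.lt_def, Fin.ext_iff, Fin.val_castSucc, Fin.val_succ] at * <;> omega

theorem inversions_mul_swap_erase {σ : Perm (Fin (r + 1))} {i : Fin r}
    (h : σ i.castSucc < σ i.succ) :
    (inversions (σ * swap i.castSucc i.succ)).erase (i.castSucc, i.succ)
      = (inversions σ).map (prodCongr (swap i.castSucc i.succ)
          (swap i.castSucc i.succ)).toEmbedding := by
  ext ⟨u, v⟩
  simp only [Finset.mem_erase, Finset.mem_map_equiv, mem_inversions,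
    prodCongr_symm, symm_swap, prodCongr_apply, Prod.map,
    Perm.mul_apply]
  constructor
  · rintro ⟨hne, huv, hσ⟩
    exact ⟨swap_castSucc_succ_lt_swap huv hne, hσ⟩
  · rintro ⟨huv, hσ⟩
    refine ⟨?_, ?_, hσ⟩
    · rintro ⟨rfl, rfl⟩
      simp only [swap_apply_left, swap_apply_right] at huv
      exact lt_asymm Fin.castSucc_lt_succ huv
    · have hne : (swap i.castSucc i.succ u, swap i.castSucc i.succ v)
          ≠ (i.castSucc, i.succ) := by
        intro huv'
        rw [Prod.mk.injEq] at huv'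
        rw [huv'.1, huv'.2] at hσ
        exact lt_asymm h hσ
      simpa only [swap_apply_self] using swap_castSucc_succ_lt_swap huv hne

theorem manEps_mul_swap_of_lt {n : ℕ} (q : Matrix (Fin n) (Fin n) ℂ)
    (I : Fin (r + 1) → Fin n) {σ : Perm (Fin (r + 1))} {i : Fin r} (h : σ i.castSucc < σ i.succ) :
    manEps q I (σ * swap i.castSucc i.succ)
      = -q (I (σ i.succ)) (I (σ i.castSucc)) * manEps q I σ := by
  have hmem : (i.castSucc, i.succ) ∈ inversions (σ * swap i.castSucc i.succ) := by
    rw [mem_inversions]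
    simpa only [Perm.mul_apply, swap_apply_left, swap_apply_right]
      using ⟨Fin.castSucc_lt_succ, h⟩
  rw [manEps_eq_prod_inversions, ← Finset.mul_prod_erase _ _ hmem, inversions_mul_swap_erase h,
    Finset.prod_map, manEps_eq_prod_inversions]
  simp [Perm.mul_apply]

theorem manEps_mul_swap {n : ℕ} {q : Matrix (Fin n) (Fin n) ℂ} (hq : IsParametric q)
    (I : Fin (r + 1) → Fin n) (σ : Perm (Fin (r + 1))) (i : Fin r) :
    manEps q I (σ * swap i.castSucc i.succ)
      = -q (I (σ i.succ)) (I (σ i.castSucc)) * manEps q I σ := by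
  rcases lt_or_gt_of_ne (σ.injective.ne (Fin.castSucc_lt_succ (i := i)).ne) with h | h
  · exact manEps_mul_swap_of_lt q I h
  · have h' : (σ * swap i.castSucc i.succ) i.castSucc < (σ * swap i.castSucc i.succ) i.succ := by
      simpa [Perm.mul_apply] using h
    have hσ := manEps_mul_swap_of_lt q I h'
    rw [mul_assoc, swap_mul_self, mul_one] at hσ
    simp only [Perm.mul_apply, swap_apply_left, swap_apply_right] at hσ
    rw [hσ, ← mul_assoc, neg_mul_neg, hq.2.1, one_mul]

end Inversions

section Products

variable {R : Type*}

theorem exists_prod_ofFn_eq_mul_mul [Monoid R] :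
    ∀ {r : ℕ} (u : Fin (r + 1) → R) (i : Fin r),
    ∃ P S : R, ∀ g : Fin (r + 1) → R, (∀ t, t ≠ i.castSucc → t ≠ i.succ → g t = u t) →
      (List.ofFn g).prod = P * (g i.castSucc * g i.succ) * S
  | r + 1, u, i => by
    induction i using Fin.cases with
    | zero =>
      refine ⟨1, (List.ofFn fun t : Fin r => u t.succ.succ).prod, fun g hg => ?_⟩
      have htail : (fun t : Fin r => g t.succ.succ) = fun t => u t.succ.succ :=
        funext fun t => hg _ (Fin.succ_ne_zero _) ((Fin.succ_injective _).ne (Fin.succ_ne_zero _))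
      simp only [List.ofFn_succ, List.prod_cons, htail, Fin.castSucc_zero, one_mul, mul_assoc]
    | succ j =>
      obtain ⟨P, S, hPS⟩ := exists_prod_ofFn_eq_mul_mul (fun t => u t.succ) j
      refine ⟨u 0 * P, S, fun g hg => ?_⟩
      rw [List.ofFn_succ, List.prod_cons, hPS (fun t => g t.succ)
        (fun t h1 h2 => hg _ (by simpa using h1) (by simpa using h2)),
        hg 0 (by simp [Fin.ext_iff]) (Fin.succ_ne_zero _).symm]
      simp only [Fin.succ_castSucc, mul_assoc]

theorem prod_ofFn_mul_of_commute [Monoid R] : ∀ {r : ℕ} (f g : Fin r → R),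
    (∀ s t, Commute (g s) (f t)) →
      (List.ofFn fun t => f t * g t).prod = (List.ofFn f).prod * (List.ofFn g).prod
  | 0, _, _, _ => by simp
  | r + 1, f, g, h => by
    have hc : Commute (g 0) (List.ofFn fun t : Fin r => f t.succ).prod :=
      Commute.list_prod_right _ _ fun x hx => by
        obtain ⟨t, rfl⟩ := List.mem_ofFn.mp hx
        exact h 0 t.succ
    simp only [List.ofFn_succ, List.prod_cons,
      prod_ofFn_mul_of_commute (fun t => f t.succ) (fun t => g t.succ) fun s t => h s.succ t.succ]
    rw [mul_assoc, mul_assoc, hc.left_comm]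

theorem prod_ofFn_sum [Semiring R] {ι : Type*} [Fintype ι] :
    ∀ {r : ℕ} (g : Fin r → ι → R),
    (List.ofFn fun t => ∑ j, g t j).prod
      = ∑ J : Fin r → ι, (List.ofFn fun t => g t (J t)).prod
  | 0, _ => by simp
  | r + 1, g => by
    rw [List.ofFn_succ, List.prod_cons, prod_ofFn_sum, Finset.sum_mul_sum,
      ← (Fin.consEquiv fun _ => ι).sum_comp, Fintype.sum_prod_type]
    simp [List.ofFn_succ]

end Products

theorem sum_perm_eq_sum_lt_add_mul_swap {α G : Type*} [Fintype α] [DecidableEq α]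
    [LinearOrder α] [AddCommMonoid G] {a b : α} (hab : a ≠ b) (F : Perm α → G) :
    ∑ σ, F σ = ∑ σ with σ a < σ b, (F σ + F (σ * swap a b)) := by
  rw [Finset.sum_add_distrib, ← Finset.sum_filter_add_sum_filter_not _ (fun σ => σ a < σ b) F]
  congr 1
  refine (Finset.sum_equiv (Equiv.mulRight (swap a b)) (fun σ => ?_) (fun _ _ => rfl)).symm
  simp only [Finset.mem_filter, Finset.mem_univ, true_and, coe_mulRight, Perm.mul_apply,
    swap_apply_left, swap_apply_right, not_lt]
  exact ⟨le_of_lt, fun h => h.lt_of_ne (σ.injective.ne hab)⟩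

theorem sum_fun_eq_sum_orderEmbOfFin_comp_perm {α G : Type*} [Fintype α] [LinearOrder α]
    [AddCommMonoid G] {r : ℕ} (f : (Fin r → α) → G)
    (hf : ∀ J, ¬ Function.Injective J → f J = 0) :
    ∑ J, f J = ∑ S : {S : Finset α // S.card = r}, ∑ τ : Perm (Fin r),
      f (S.1.orderEmbOfFin S.2 ∘ τ) := by
  rw [← Fintype.sum_prod_type',
    ← Finset.sum_filter_of_ne fun J _ hJ => by_contra fun h => hJ (hf J h)]
  symm
  refine Finset.sum_bij (fun x _ => x.1.1.orderEmbOfFin x.1.2 ∘ x.2) ?_ ?_ ?_ (fun _ _ => rfl)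
  · intro x _
    simpa using (x.1.1.orderEmbOfFin x.1.2).injective.comp x.2.injective
  · rintro ⟨⟨S, hS⟩, τ⟩ - ⟨⟨S', hS'⟩, τ'⟩ - h
    obtain rfl : S = S' := by
      have := congrArg Set.range h
      simp only [EquivLike.range_comp, Finset.range_orderEmbOfFin, Finset.coe_inj] at this
      exact this
    simp only [Prod.mk.injEq, true_and]
    exact Equiv.ext fun t => (S.orderEmbOfFin hS).injective (congrFun h t)
  · intro J hJ
    replace hJ : Function.Injective J := by simpa using hJ
    have hcard : (Finset.univ.image J).card = r := by
      rw [Finset.card_image_of_injective _ hJ, Finset.card_univ, Fintype.card_fin]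
    let e := (Finset.univ.image J).orderIsoOfFin hcard
    have hmem : ∀ t, J t ∈ Finset.univ.image J := fun t =>
      Finset.mem_image_of_mem J (Finset.mem_univ t)
    have hτ : Function.Injective fun t => e.symm ⟨J t, hmem t⟩ := fun s t hst => by
      simpa using hJ (congrArg Subtype.val (e.symm.injective hst))
    refine ⟨(⟨_, hcard⟩, Equiv.ofBijective _ (Finite.injective_iff_bijective.mp hτ)),
      Finset.mem_univ _, funext fun t => ?_⟩
    simp [e, ← Finset.coe_orderIsoOfFin_apply]

section Manin

variable {R : Type*} [Ring R] [Algebra ℂ R] {n m : ℕ}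
  {q : Matrix (Fin n) (Fin n) ℂ} {p : Matrix (Fin m) (Fin m) ℂ} {M : Matrix (Fin n) (Fin m) R}

/-- Exchanging the columns of a `2 × 2` column `q̂`-minor of a Manin matrix multiplies it by
`-p_{lk}`. -/
theorem IsManin.two_minor_swap (hp : IsParametric p) (hM : IsManin q p M) {A B : Fin n}
    (hAB : A < B) (k l : Fin m) :
    M A l * M B k - q B A • (M B l * M A k)
      = -p l k • (M A k * M B l - q B A • (M B k * M A l)) := by
  rcases lt_trichotomy k l with hkl | rfl | hkl
  · linear_combination (norm := module)
      p l k • hM.2 A B k l hAB hkl - hp.2.1 l k • (M A l * M B k - q B A • (M B l * M A k))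
  · rw [hM.1 A B k hAB, sub_self, smul_zero]
  · linear_combination (norm := module) hM.2 A B l k hAB hkl

theorem cdet_comp_swap (hp : IsParametric p) (hM : IsManin q p M) {r : ℕ}
    {I : Fin (r + 1) → Fin n} (hI : StrictMono I) (J : Fin (r + 1) → Fin m) (i : Fin r) :
    cdet q M I (J ∘ swap i.castSucc i.succ)
      = -p (J i.succ) (J i.castSucc) • cdet q M I J := by
  have hab : i.castSucc ≠ i.succ := Fin.castSucc_lt_succ.ne
  rw [cdet, cdet, Finset.smul_sum, sum_perm_eq_sum_lt_add_mul_swap hab,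
    sum_perm_eq_sum_lt_add_mul_swap hab]
  -- The terms of `σ` and `σ * swap` differ only in the factors at positions `i`, `i + 1`, which
  -- combine into the `2 × 2` minors of `IsManin.two_minor_swap`.
  refine Finset.sum_congr rfl fun σ hσ => ?_
  replace hσ : σ i.castSucc < σ i.succ := (Finset.mem_filter.mp hσ).2
  obtain ⟨P, S, hPS⟩ := exists_prod_ofFn_eq_mul_mul (fun t => M (I (σ t)) (J t)) i
  simp only [Function.comp_apply, Perm.mul_apply]
  rw [hPS, hPS, hPS, hPS] <;> try (intro t ha hb; simp only [swap_apply_of_ne_of_ne ha hb])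
  have hPS_smul : ∀ (c : ℂ) (x : R), c • (P * x * S) = P * (c • x) * S := fun c x => by
    rw [mul_smul_comm, smul_mul_assoc]
  simp only [swap_apply_left, swap_apply_right, manEps_mul_swap_of_lt q I hσ, hPS_smul,
    ← mul_add, ← add_mul]
  congr 2
  linear_combination (norm := module)
    manEps q I σ • hM.two_minor_swap hp (hI hσ) (J i.castSucc) (J i.succ)

theorem cdet_eq_zero_of_apply_castSucc_eq_apply_succ (hp : IsParametric p) (hM : IsManin q p M)
    {r : ℕ} {I : Fin (r + 1) → Fin n} (hI : StrictMono I) {J : Fin (r + 1) → Fin m} {i : Fin r}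
    (hJ : J i.castSucc = J i.succ) : cdet q M I J = 0 := by
  have hJs : J ∘ swap i.castSucc i.succ = J := by
    funext t
    rcases eq_or_ne t i.castSucc with rfl | ha
    · simp [hJ]
    rcases eq_or_ne t i.succ with rfl | hb
    · simp [hJ]
    simp [swap_apply_of_ne_of_ne ha hb]
  have h := cdet_comp_swap hp hM hI J i
  rw [hJs, ← hJ, hp.2.2] at h
  have h2 : (2 : ℂ) • cdet q M I J = 0 := by linear_combination (norm := module) h
  exact (smul_eq_zero.mp h2).resolve_left two_ne_zero

theorem cdet_comp_perm (hp : IsParametric p) (hM : IsManin q p M) {r : ℕ}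
    {I : Fin r → Fin n} (hI : StrictMono I) (J : Fin r → Fin m) (τ : Perm (Fin r)) :
    cdet q M I (J ∘ τ) = manEps p J τ • cdet q M I J := by
  rcases r with _ | r
  · rw [Subsingleton.elim τ 1]
    simp
  induction τ using Submonoid.induction_of_closure_eq_top_right
    (Perm.mclosure_swap_castSucc_succ r) with
  | one => simp
  | mul_right τ _ hy ih =>
    obtain ⟨i, rfl⟩ := hy
    rw [Perm.coe_mul, ← Function.comp_assoc, cdet_comp_swap hp hM hI, ih, smul_smul,
      manEps_mul_swap hp]
    rfl

theorem cdet_eq_zero_of_not_injective (hp : IsParametric p) (hM : IsManin q p M) {r : ℕ}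
    {I : Fin r → Fin n} (hI : StrictMono I) {J : Fin r → Fin m} (hJ : ¬ Function.Injective J) :
    cdet q M I J = 0 := by
  obtain ⟨s, t, hJst, hst⟩ := Function.not_injective_iff.mp hJ
  wlog hlt : s < t generalizing s t
  · exact this t s hJst.symm hst.symm (hst.lt_or_gt.resolve_left hlt)
  rcases r with _ | r
  · exact s.elim0
  obtain ⟨i, rfl⟩ : ∃ i : Fin r, i.castSucc = s :=
    Fin.exists_castSucc_eq.mpr (Fin.ne_last_of_lt hlt)
  -- Moving `t` next to `s` produces equal adjacent columns.
  have hadj : (J ∘ swap i.succ t) i.castSucc = (J ∘ swap i.succ t) i.succ := by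
    rw [Function.comp_apply, Function.comp_apply, swap_apply_left,
      swap_apply_of_ne_of_ne Fin.castSucc_lt_succ.ne hst, hJst]
  have hJ' : J = (J ∘ swap i.succ t) ∘ swap i.succ t := by
    rw [Function.comp_assoc, ← Perm.coe_mul, swap_mul_self, Perm.coe_one, Function.comp_id]
  rw [hJ', cdet_comp_perm hp hM hI,
    cdet_eq_zero_of_apply_castSucc_eq_apply_succ hp hM hI hadj, smul_zero]

end Manin

section CauchyBinet

variable {R : Type*} [Ring R] [Algebra ℂ R] {n m : ℕ}
  {q : Matrix (Fin n) (Fin n) ℂ} {p : Matrix (Fin m) (Fin m) ℂ}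

theorem cdet_mul_eq_sum {M : Matrix (Fin n) (Fin m) R} {N : Matrix (Fin m) (Fin n) R}
    (hcomm : ∀ i j k l, Commute (M i j) (N k l)) {r : ℕ} (I K : Fin r → Fin n) :
    cdet q (M * N) I K
      = ∑ J : Fin r → Fin m, cdet q M I J * (List.ofFn fun t => N (J t) (K t)).prod := by
  simp only [cdet, Matrix.mul_apply, prod_ofFn_sum,
    prod_ofFn_mul_of_commute _ _ fun _ _ => (hcomm _ _ _ _).symm, Finset.smul_sum,
    Finset.sum_mul, smul_mul_assoc]
  exact Finset.sum_comm

theorem cdet_mul (hp : IsParametric p) {M : Matrix (Fin n) (Fin m) R} (hM : IsManin q p M)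
    {N : Matrix (Fin m) (Fin n) R} (hcomm : ∀ i j k l, Commute (M i j) (N k l)) {r : ℕ}
    {I : Fin r → Fin n} (hI : StrictMono I) (K : Fin r → Fin n) :
    cdet q (M * N) I K = ∑ T : {T : Finset (Fin m) // T.card = r},
      cdet q M I (T.1.orderEmbOfFin T.2) * cdet p N (T.1.orderEmbOfFin T.2) K := by
  rw [cdet_mul_eq_sum hcomm,
    sum_fun_eq_sum_orderEmbOfFin_comp_perm _ fun J hJ => by
      rw [cdet_eq_zero_of_not_injective hp hM hI hJ, zero_mul]]
  refine Finset.sum_congr rfl fun T _ => ?_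
  simp only [cdet_comp_perm hp hM hI, smul_mul_assoc, ← mul_smul_comm, ← Finset.mul_sum]
  rfl

theorem commute_cdet_cdet {n' m' : ℕ} {p : Matrix (Fin m') (Fin m') ℂ}
    {M : Matrix (Fin n) (Fin m) R} {N : Matrix (Fin m') (Fin n') R}
    (hcomm : ∀ i j k l, Commute (M i j) (N k l)) {r r' : ℕ} (I : Fin r → Fin n)
    (J : Fin r → Fin m) (J' : Fin r' → Fin m') (I' : Fin r' → Fin n') :
    Commute (cdet q M I J) (cdet p N J' I') :=
  Commute.sum_left _ _ _ fun _ _ => Commute.sum_right _ _ _ fun _ _ =>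
    ((Commute.list_prod_left _ _ fun _ hx => Commute.list_prod_right _ _ fun _ hy => by
      obtain ⟨_, rfl⟩ := List.mem_ofFn.mp hx
      obtain ⟨_, rfl⟩ := List.mem_ofFn.mp hy
      exact hcomm _ _ _ _).smul_left _).smul_right _

theorem esum_mul_comm (hq : IsParametric q) (hp : IsParametric p)
    {M : Matrix (Fin n) (Fin m) R} (hM : IsManin q p M)
    {N : Matrix (Fin m) (Fin n) R} (hN : IsManin p q N)
    (hcomm : ∀ i j k l, Commute (M i j) (N k l)) (k : ℕ) :
    esum q (M * N) k = esum p (N * M) k := by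
  let e {N : ℕ} (S : {S : Finset (Fin N) // S.card = k}) := S.1.orderEmbOfFin S.2
  calc esum q (M * N) k
      = ∑ S, ∑ T, cdet q M (e S) (e T) * cdet p N (e T) (e S) :=
        Finset.sum_congr rfl fun S _ => cdet_mul hp hM hcomm (e S).strictMono _
    _ = ∑ T, ∑ S, cdet p N (e T) (e S) * cdet q M (e S) (e T) := by
        rw [Finset.sum_comm]
        exact Finset.sum_congr rfl fun _ _ => Finset.sum_congr rfl fun _ _ =>
          (commute_cdet_cdet hcomm _ _ _ _).eq
    _ = esum p (N * M) k :=
        (Finset.sum_congr rfl fun T _ =>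
          cdet_mul hq hN (fun i j k l => (hcomm k l i j).symm) (e T).strictMono _).symm

theorem esum_eq_zero_of_lt {N : ℕ} (q : Matrix (Fin N) (Fin N) ℂ)
    (X : Matrix (Fin N) (Fin N) R) {k : ℕ} (hk : N < k) : esum q X k = 0 := by
  have : IsEmpty {S : Finset (Fin N) // S.card = k} :=
    ⟨fun S => hk.not_ge (S.2 ▸ (Finset.card_le_univ S.1).trans_eq (Fintype.card_fin N))⟩
  simp [esum]

end CauchyBinet

open Polynomial in
theorem sum_range_smul_C_mul_X_pow_eq_X_pow_mul {R : Type*} [Ring R] {e : ℕ → R} {m n : ℕ}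
    (he : ∀ k, m < k → e k = 0) (hmn : m ≤ n) :
    ∑ k ∈ Finset.range (n + 1), (-1 : ℤ) ^ k • (C (e k) * X ^ (n - k))
      = X ^ (n - m) * ∑ k ∈ Finset.range (m + 1), (-1 : ℤ) ^ k • (C (e k) * X ^ (m - k)) := by
  rw [Finset.mul_sum, ← Finset.sum_subset (Finset.range_subset_range.mpr (Nat.succ_le_succ hmn))
    fun k _ hk => by rw [he k (by simpa using hk), C_0, zero_mul, smul_zero]]
  refine Finset.sum_congr rfl fun k hk => ?_
  rw [mul_smul_comm, ← mul_assoc, X_pow_mul, mul_assoc, ← pow_add,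
    Nat.sub_add_sub_cancel hmn (by simpa [Nat.lt_succ_iff] using hk)]

/-- For `M` an `n×m` `(q̂,p̂)`-Manin matrix and `N` an `m×n` `(p̂,q̂)`-Manin matrix with
mutually commuting entries, `e_k(MN) = e_k(NM)` for all `k`, and consequently if `m ≤ n`
the characteristic polynomials satisfy `char_{q̂}(MN,t) = t^{n-m} char_{p̂}(NM,t)`. -/
theorem char_poly_MN_NM {R : Type*} [Ring R] [Algebra ℂ R] {n m : ℕ}
    (q : Matrix (Fin n) (Fin n) ℂ) (p : Matrix (Fin m) (Fin m) ℂ)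
    (hq : IsParametric q) (hp : IsParametric p)
    (M : Matrix (Fin n) (Fin m) R) (hM : IsManin q p M)
    (N : Matrix (Fin m) (Fin n) R) (hN : IsManin p q N)
    (hcomm : ∀ (i : Fin n) (j : Fin m) (k : Fin m) (l : Fin n),
      Commute (M i j) (N k l)) :
    (∀ k : ℕ, esum q (M * N) k = esum p (N * M) k) ∧
    (m ≤ n →
      ∑ k ∈ Finset.range (n + 1), ((-1 : ℤ)) ^ k •
          (Polynomial.C (esum q (M * N) k) * Polynomial.X ^ (n - k))
        = Polynomial.X ^ (n - m) *
            ∑ k ∈ Finset.range (m + 1), ((-1 : ℤ)) ^ k •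
              (Polynomial.C (esum p (N * M) k) * Polynomial.X ^ (m - k))) := by
  have he := esum_mul_comm hq hp hM hN hcomm
  refine ⟨he, fun hmn => ?_⟩
  simp only [he]
  exact sum_range_smul_C_mul_X_pow_eq_X_pow_mul (fun k hk => esum_eq_zero_of_lt p (N * M) hk) hmn
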